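/- For the dihedral quandle R_8 of order 8, the quotient Δ²(R_8)/Δ³(R_8) of augmentation ideal powers is isomorphic as an abelian group to Z/4 ⊕ Z/4; in particular its order is 16, not 8. -/

import Mathlib

/-- Dihedral quandle operation on `ZMod n`: `a · b = 2b - a`. -/
def dq (n : ℕ) (a b : ZMod n) : ZMod n := 2 * b - a

/-- Quandle ring multiplication on `ℤ[R_n] = ZMod n →₀ ℤ`. -/
noncomputable def qmul (n : ℕ) (x y : ZMod n →₀ ℤ) : ZMod n →₀ ℤ :=
  x.sum fun a r => y.sum fun b s => Finsupp.single (dq n a b) (r * s)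

/-- Augmentation map. -/
noncomputable def aug (n : ℕ) : (ZMod n →₀ ℤ) →ₗ[ℤ] ℤ :=
  Finsupp.lsum ℤ fun _ => LinearMap.id

/-- `e i = a_i - a_0`. -/
noncomputable def e (n : ℕ) (i : ZMod n) : ZMod n →₀ ℤ :=
  Finsupp.single i 1 - Finsupp.single 0 1

/-- Augmentation ideal. -/
noncomputable def Δ (n : ℕ) : Submodule ℤ (ZMod n →₀ ℤ) := LinearMap.ker (aug n)

noncomputable def Δ2 (n : ℕ) : Submodule ℤ (ZMod n →₀ ℤ) :=
  Submodule.span ℤ {z | ∃ x ∈ Δ n, ∃ y ∈ Δ n, z = qmul n x y}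

noncomputable def Δ3 (n : ℕ) : Submodule ℤ (ZMod n →₀ ℤ) :=
  Submodule.span ℤ {z | ∃ x ∈ Δ2 n, ∃ y ∈ Δ n, z = qmul n x y}


abbrev M8 := ZMod 8 →₀ ℤ

lemma qmul_single_single (a b : ZMod 8) (r s : ℤ) :
    qmul 8 (Finsupp.single a r) (Finsupp.single b s) = Finsupp.single (dq 8 a b) (r * s) := by
  unfold qmul
  rw [Finsupp.sum_single_index (by simp), Finsupp.sum_single_index (by simp)]

lemma qmul_sub_left (x x' y : M8) : qmul 8 (x - x') y = qmul 8 x y - qmul 8 x' y := by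
  unfold qmul
  exact Finsupp.sum_sub_index (by intros; simp [sub_mul, Finsupp.single_sub, Finsupp.sum_sub])

lemma qmul_sub_right (x y y' : M8) : qmul 8 x (y - y') = qmul 8 x y - qmul 8 x y' := by
  unfold qmul
  rw [← Finsupp.sum_sub]
  exact Finsupp.sum_congr fun a _ =>
    Finsupp.sum_sub_index (by intros; simp [mul_sub, Finsupp.single_sub])

lemma qmul_add_left (x x' y : M8) : qmul 8 (x + x') y = qmul 8 x y + qmul 8 x' y := by
  unfold qmul
  exact Finsupp.sum_add_index' (by simp) (by intros; simp [add_mul, Finsupp.single_add, Finsupp.sum_add])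

lemma aug_apply (x : M8) : aug 8 x = x.sum fun _ r => r := by
  rw [aug, Finsupp.lsum_apply]; rfl

lemma e_mem_delta (i : ZMod 8) : e 8 i ∈ Δ 8 := by
  simp [Δ, LinearMap.mem_ker, e, map_sub, aug]

lemma delta_eq : Δ 8 = Submodule.span ℤ (Set.range (e 8)) := by
  apply le_antisymm
  · intro x hx
    have hx0 : (x.sum fun _ r => r) = 0 := by
      have := (LinearMap.mem_ker).mp hx
      rwa [aug_apply] at this
    have hrep : (x.sum fun i r => r • e 8 i) = x := by
      unfold e
      have h1 : (x.sum fun i r => r • (Finsupp.single i (1:ℤ) - Finsupp.single 0 1)) =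
          x.sum fun i r => (Finsupp.single i r - Finsupp.single 0 r) := by
        apply Finsupp.sum_congr
        intro a _
        simp [smul_sub, Finsupp.smul_single]
      rw [h1, Finsupp.sum_sub]
      have h2 : (x.sum fun i r => Finsupp.single (0 : ZMod 8) r) =
          Finsupp.single (0 : ZMod 8) (x.sum fun _ r => r) :=
        (map_finsuppSum (Finsupp.singleAddHom (0 : ZMod 8)) x fun _ r => r).symm
      rw [h2, hx0, Finsupp.single_zero, sub_zero, Finsupp.sum_single]
    rw [← hrep]
    exact Submodule.finsuppSum_mem _ _ _ _ fun i _ =>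
      Submodule.smul_mem _ _ (Submodule.subset_span ⟨i, rfl⟩)
  · rw [Submodule.span_le]
    rintro z ⟨i, rfl⟩
    exact e_mem_delta i

noncomputable def qg (a : ZMod 8) : M8 →ₗ[ℤ] M8 := Finsupp.lsum ℤ fun b => Finsupp.lsingle (dq 8 a b)
noncomputable def qmulB : M8 →ₗ[ℤ] M8 →ₗ[ℤ] M8 :=
  Finsupp.lsum ℤ fun a => LinearMap.toSpanSingleton ℤ (M8 →ₗ[ℤ] M8) (qg a)

lemma qmul_eq (x y : M8) : qmul 8 x y = qmulB x y := by
  unfold qmul qmulB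
  rw [Finsupp.lsum_apply, LinearMap.finsupp_sum_apply]
  apply Finsupp.sum_congr
  intro a _
  simp only [LinearMap.smul_apply, qg, Finsupp.lsum_apply, Finsupp.smul_sum,
    LinearMap.toSpanSingleton_apply, Finsupp.lsingle_apply, Finsupp.smul_single, smul_eq_mul]

noncomputable def pe (i j : ZMod 8) : M8 :=
  Finsupp.single (2*j-i) 1 - Finsupp.single (2*j) 1 - Finsupp.single (-i) 1 + Finsupp.single 0 1

noncomputable def qe (i j k : ZMod 8) : M8 :=
  (Finsupp.single (2*k-(2*j-i)) 1 - Finsupp.single (-(2*j-i)) 1)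
  - (Finsupp.single (2*k-2*j) 1 - Finsupp.single (-(2*j)) 1)
  - (Finsupp.single (2*k+i) 1 - Finsupp.single i 1)
  + (Finsupp.single (2*k) 1 - Finsupp.single (0:ZMod 8) 1)

lemma qmul_e_e (i j : ZMod 8) : qmul 8 (e 8 i) (e 8 j) = pe i j := by
  unfold e
  rw [qmul_sub_left, qmul_sub_right, qmul_sub_right, qmul_single_single, qmul_single_single,
    qmul_single_single, qmul_single_single]
  unfold pe dq
  simp only [mul_zero, zero_sub, sub_zero, mul_one, one_mul]
  abel

lemma qmul_pe_e (i j k : ZMod 8) : qmul 8 (pe i j) (e 8 k) = qe i j k := by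
  unfold pe e
  rw [qmul_add_left, qmul_sub_left, qmul_sub_left]
  rw [qmul_sub_right, qmul_sub_right, qmul_sub_right, qmul_sub_right]
  repeat rw [qmul_single_single]
  unfold qe dq
  simp only [mul_zero, zero_sub, sub_zero, mul_one, one_mul, neg_neg]
  abel

lemma qmulB_e_e (i j : ZMod 8) : qmulB (e 8 i) (e 8 j) = pe i j := by
  rw [← qmul_eq, qmul_e_e]

lemma qmulB_pe_e (i j k : ZMod 8) : qmulB (pe i j) (e 8 k) = qe i j k := by
  rw [← qmul_eq, qmul_pe_e]

lemma d2_eq : Δ2 8 = Submodule.span ℤ (Set.range fun t : ZMod 8 × ZMod 8 => pe t.1 t.2) := by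
  have h1 : Δ2 8 = Submodule.map₂ qmulB (Δ 8) (Δ 8) := by
    rw [Submodule.map₂_eq_span_image2]
    unfold Δ2
    congr 1
    ext z
    constructor
    · rintro ⟨x, hx, y, hy, rfl⟩; exact ⟨x, hx, y, hy, by exact (qmul_eq x y).symm⟩
    · rintro ⟨x, hx, y, hy, rfl⟩; exact ⟨x, hx, y, hy, by exact (qmul_eq x y).symm⟩
  rw [h1, delta_eq, Submodule.map₂_span_span]
  congr 1
  ext z
  constructor
  · rintro ⟨_, ⟨i, rfl⟩, _, ⟨j, rfl⟩, rfl⟩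
    exact ⟨(i, j), by exact (qmulB_e_e i j).symm⟩
  · rintro ⟨⟨i, j⟩, rfl⟩
    exact ⟨e 8 i, ⟨i, rfl⟩, e 8 j, ⟨j, rfl⟩, by exact qmulB_e_e i j⟩

lemma d3_eq : Δ3 8 = Submodule.span ℤ
    (Set.range fun t : ZMod 8 × ZMod 8 × ZMod 8 => qe t.1 t.2.1 t.2.2) := by
  have h1 : Δ3 8 = Submodule.map₂ qmulB (Δ2 8) (Δ 8) := by
    rw [Submodule.map₂_eq_span_image2]
    unfold Δ3
    congr 1
    ext z
    constructor
    · rintro ⟨x, hx, y, hy, rfl⟩; exact ⟨x, hx, y, hy, by exact (qmul_eq x y).symm⟩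
    · rintro ⟨x, hx, y, hy, rfl⟩; exact ⟨x, hx, y, hy, by exact (qmul_eq x y).symm⟩
  rw [h1, d2_eq, delta_eq, Submodule.map₂_span_span]
  congr 1
  ext z
  constructor
  · rintro ⟨_, ⟨⟨i, j⟩, rfl⟩, _, ⟨k, rfl⟩, rfl⟩
    exact ⟨(i, j, k), by exact (qmulB_pe_e i j k).symm⟩
  · rintro ⟨⟨i, j, k⟩, rfl⟩
    exact ⟨pe i j, ⟨(i, j), rfl⟩, e 8 k, ⟨k, rfl⟩, by exact qmulB_pe_e i j k⟩

lemma pe_memD2 (i j : ZMod 8) : pe i j ∈ Δ2 8 := by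
  rw [d2_eq]; exact Submodule.subset_span ⟨(i, j), rfl⟩

lemma qe_memD3 (i j k : ZMod 8) : qe i j k ∈ Δ3 8 := by
  rw [d3_eq]; exact Submodule.subset_span ⟨(i, j, k), rfl⟩

-- the weight functional
def w1t : ZMod 8 → ZMod 8 := ![0,0,0,2,0,4,0,6]
def w2t : ZMod 8 → ZMod 8 := ![0,0,1,1,0,0,5,5]
def W : ZMod 8 → ZMod 8 × ZMod 8 := fun x => (w1t x, w2t x)

noncomputable def phi : M8 →ₗ[ℤ] ZMod 8 × ZMod 8 :=
  Finsupp.lsum ℤ fun x => LinearMap.toSpanSingleton ℤ _ (W x)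

lemma phi_single (v : ZMod 8) (r : ℤ) : phi (Finsupp.single v r) = r • W v := by
  simp [phi, Finsupp.lsum_single, LinearMap.toSpanSingleton_apply]

lemma phi_pe (i j : ZMod 8) : phi (pe i j) = W (2*j-i) - W (2*j) - W (-i) + W 0 := by
  simp [pe, map_add, map_sub, phi_single, one_smul]

lemma phi_qe (i j k : ZMod 8) : phi (qe i j k) =
    (W (2*k-(2*j-i)) - W (-(2*j-i))) - (W (2*k-2*j) - W (-(2*j)))
    - (W (2*k+i) - W i) + (W (2*k) - W 0) := by
  simp [qe, map_add, map_sub, phi_single, one_smul]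

lemma W_qe_zero : ∀ i j k : ZMod 8,
    (W (2*k-(2*j-i)) - W (-(2*j-i))) - (W (2*k-2*j) - W (-(2*j)))
    - (W (2*k+i) - W i) + (W (2*k) - W 0) = 0 := by decide

lemma phi_qe_zero (i j k : ZMod 8) : phi (qe i j k) = 0 := by
  rw [phi_qe]; exact W_qe_zero i j k

def gH : ZMod 4 →+ ZMod 8 := AddMonoidHom.mk' (fun a => ((2 * a.val : ℕ) : ZMod 8)) (by decide)
def Hl : (ZMod 4 × ZMod 4) →ₗ[ℤ] (ZMod 8 × ZMod 8) := (gH.prodMap gH).toIntLinearMap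

lemma Hl_inj : Function.Injective Hl := by decide

lemma phi_pe_mem_rangeH (i j : ZMod 8) : phi (pe i j) ∈ LinearMap.range Hl := by
  rw [phi_pe]
  have h : ∀ i j : ZMod 8, ∃ v : ZMod 4 × ZMod 4,
      Hl v = W (2*j-i) - W (2*j) - W (-i) + W 0 := by decide
  obtain ⟨v, hv⟩ := h i j
  exact ⟨v, hv⟩

-- computable coordinate models
def pef (i j x : ZMod 8) : ℤ :=
  (if 2*j-i = x then 1 else 0) - (if 2*j = x then 1 else 0)
  - (if -i = x then 1 else 0) + (if (0:ZMod 8) = x then 1 else 0)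

def qef (i j k x : ZMod 8) : ℤ :=
  ((if 2*k-(2*j-i) = x then 1 else 0) - (if -(2*j-i) = x then 1 else 0))
  - ((if 2*k-2*j = x then 1 else 0) - (if -(2*j) = x then 1 else 0))
  - ((if 2*k+i = x then 1 else 0) - (if (i:ZMod 8) = x then 1 else 0))
  + ((if 2*k = x then 1 else 0) - (if (0:ZMod 8) = x then 1 else 0))

lemma pe_apply (i j x : ZMod 8) : pe i j x = pef i j x := by
  simp [pe, pef, Finsupp.single_apply, Finsupp.add_apply, Finsupp.sub_apply]

lemma qe_apply (i j k x : ZMod 8) : qe i j k x = qef i j k x := by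
  simp [qe, qef, Finsupp.single_apply, Finsupp.add_apply, Finsupp.sub_apply]

noncomputable def u1 : M8 := pe 7 1
noncomputable def u2 : M8 := pe 2 1

lemma phi_u1 : phi u1 = ((2:ZMod 8), (0:ZMod 8)) := by
  show phi (pe 7 1) = _
  rw [phi_pe]; decide

lemma phi_u2 : phi u2 = ((0:ZMod 8), (2:ZMod 8)) := by
  show phi (pe 2 1) = _
  rw [phi_pe]; decide

noncomputable def NN : Submodule ℤ M8 := Δ3 8 ⊔ Submodule.span ℤ {u1, u2}

lemma cert_mem (i j : ZMod 8) (c : Fin 6 → ℤ) (a b : ℤ)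
    (h : ∀ x : ZMod 8, pef i j x =
      c 0 * qef 6 7 3 x + c 1 * qef 1 1 3 x + c 2 * qef 4 3 3 x + c 3 * qef 3 2 2 x
      + c 4 * qef 3 5 2 x + c 5 * qef 2 2 1 x + a * pef 7 1 x + b * pef 2 1 x) :
    pe i j ∈ NN := by
  have he : pe i j = c 0 • qe 6 7 3 + c 1 • qe 1 1 3 + c 2 • qe 4 3 3 + c 3 • qe 3 2 2
      + c 4 • qe 3 5 2 + c 5 • qe 2 2 1 + a • u1 + b • u2 := by
    ext x
    simp only [Finsupp.add_apply, Finsupp.smul_apply, smul_eq_mul, u1, u2, pe_apply, qe_apply]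
    exact h x
  rw [he]
  refine add_mem (add_mem (add_mem (add_mem (add_mem (add_mem (add_mem ?_ ?_) ?_) ?_) ?_) ?_) ?_) ?_
  · exact Submodule.smul_mem _ _ (Submodule.mem_sup_left (qe_memD3 6 7 3))
  · exact Submodule.smul_mem _ _ (Submodule.mem_sup_left (qe_memD3 1 1 3))
  · exact Submodule.smul_mem _ _ (Submodule.mem_sup_left (qe_memD3 4 3 3))
  · exact Submodule.smul_mem _ _ (Submodule.mem_sup_left (qe_memD3 3 2 2))
  · exact Submodule.smul_mem _ _ (Submodule.mem_sup_left (qe_memD3 3 5 2))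
  · exact Submodule.smul_mem _ _ (Submodule.mem_sup_left (qe_memD3 2 2 1))
  · exact Submodule.smul_mem _ _ (Submodule.mem_sup_right (Submodule.subset_span (by simp)))
  · exact Submodule.smul_mem _ _ (Submodule.mem_sup_right (Submodule.subset_span (by simp)))

lemma cert_memD3 (i j : ZMod 8) (m : ℤ) (c : Fin 6 → ℤ)
    (h : ∀ x : ZMod 8, m * pef i j x =
      c 0 * qef 6 7 3 x + c 1 * qef 1 1 3 x + c 2 * qef 4 3 3 x + c 3 * qef 3 2 2 x
      + c 4 * qef 3 5 2 x + c 5 * qef 2 2 1 x) :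
    m • pe i j ∈ Δ3 8 := by
  have he : m • pe i j = c 0 • qe 6 7 3 + c 1 • qe 1 1 3 + c 2 • qe 4 3 3 + c 3 • qe 3 2 2
      + c 4 • qe 3 5 2 + c 5 • qe 2 2 1 := by
    ext x
    simp only [Finsupp.add_apply, Finsupp.smul_apply, smul_eq_mul, pe_apply, qe_apply]
    exact h x
  rw [he]
  refine add_mem (add_mem (add_mem (add_mem (add_mem ?_ ?_) ?_) ?_) ?_) ?_ <;>
    exact Submodule.smul_mem _ _ (qe_memD3 _ _ _)

-- certificate tables
def Ct : Fin 8 → Fin 8 → Fin 6 → ℤ := ![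
  ![![(0 : ℤ), (0 : ℤ), (0 : ℤ), (0 : ℤ), (0 : ℤ), (0 : ℤ)], ![(0 : ℤ), (0 : ℤ), (0 : ℤ), (0 : ℤ), (0 : ℤ), (0 : ℤ)], ![(0 : ℤ), (0 : ℤ), (0 : ℤ), (0 : ℤ), (0 : ℤ), (0 : ℤ)], ![(0 : ℤ), (0 : ℤ), (0 : ℤ), (0 : ℤ), (0 : ℤ), (0 : ℤ)], ![(0 : ℤ), (0 : ℤ), (0 : ℤ), (0 : ℤ), (0 : ℤ), (0 : ℤ)], ![(0 : ℤ), (0 : ℤ), (0 : ℤ), (0 : ℤ), (0 : ℤ), (0 : ℤ)], ![(0 : ℤ), (0 : ℤ), (0 : ℤ), (0 : ℤ), (0 : ℤ), (0 : ℤ)], ![(0 : ℤ), (0 : ℤ), (0 : ℤ), (0 : ℤ), (0 : ℤ), (0 : ℤ)]],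
  ![![(0 : ℤ), (0 : ℤ), (0 : ℤ), (0 : ℤ), (0 : ℤ), (0 : ℤ)], ![(0 : ℤ), (1 : ℤ), (1 : ℤ), (0 : ℤ), (-1 : ℤ), (0 : ℤ)], ![(1 : ℤ), (1 : ℤ), (1 : ℤ), (0 : ℤ), (-1 : ℤ), (1 : ℤ)], ![(1 : ℤ), (2 : ℤ), (3 : ℤ), (-1 : ℤ), (-1 : ℤ), (2 : ℤ)], ![(0 : ℤ), (0 : ℤ), (0 : ℤ), (0 : ℤ), (0 : ℤ), (0 : ℤ)], ![(0 : ℤ), (1 : ℤ), (1 : ℤ), (0 : ℤ), (-1 : ℤ), (0 : ℤ)], ![(1 : ℤ), (1 : ℤ), (1 : ℤ), (0 : ℤ), (-1 : ℤ), (1 : ℤ)], ![(1 : ℤ), (2 : ℤ), (3 : ℤ), (-1 : ℤ), (-1 : ℤ), (2 : ℤ)]],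
  ![![(0 : ℤ), (0 : ℤ), (0 : ℤ), (0 : ℤ), (0 : ℤ), (0 : ℤ)], ![(0 : ℤ), (0 : ℤ), (0 : ℤ), (0 : ℤ), (0 : ℤ), (0 : ℤ)], ![(1 : ℤ), (0 : ℤ), (0 : ℤ), (0 : ℤ), (0 : ℤ), (1 : ℤ)], ![(1 : ℤ), (0 : ℤ), (1 : ℤ), (0 : ℤ), (0 : ℤ), (1 : ℤ)], ![(0 : ℤ), (0 : ℤ), (0 : ℤ), (0 : ℤ), (0 : ℤ), (0 : ℤ)], ![(0 : ℤ), (0 : ℤ), (0 : ℤ), (0 : ℤ), (0 : ℤ), (0 : ℤ)], ![(1 : ℤ), (0 : ℤ), (0 : ℤ), (0 : ℤ), (0 : ℤ), (1 : ℤ)], ![(1 : ℤ), (0 : ℤ), (1 : ℤ), (0 : ℤ), (0 : ℤ), (1 : ℤ)]],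
  ![![(0 : ℤ), (0 : ℤ), (0 : ℤ), (0 : ℤ), (0 : ℤ), (0 : ℤ)], ![(1 : ℤ), (0 : ℤ), (1 : ℤ), (0 : ℤ), (-1 : ℤ), (0 : ℤ)], ![(0 : ℤ), (1 : ℤ), (1 : ℤ), (0 : ℤ), (-2 : ℤ), (0 : ℤ)], ![(1 : ℤ), (1 : ℤ), (2 : ℤ), (0 : ℤ), (-2 : ℤ), (1 : ℤ)], ![(0 : ℤ), (0 : ℤ), (0 : ℤ), (0 : ℤ), (0 : ℤ), (0 : ℤ)], ![(1 : ℤ), (0 : ℤ), (1 : ℤ), (0 : ℤ), (-1 : ℤ), (0 : ℤ)], ![(0 : ℤ), (1 : ℤ), (1 : ℤ), (0 : ℤ), (-2 : ℤ), (0 : ℤ)], ![(1 : ℤ), (1 : ℤ), (2 : ℤ), (0 : ℤ), (-2 : ℤ), (1 : ℤ)]],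
  ![![(0 : ℤ), (0 : ℤ), (0 : ℤ), (0 : ℤ), (0 : ℤ), (0 : ℤ)], ![(1 : ℤ), (0 : ℤ), (0 : ℤ), (0 : ℤ), (0 : ℤ), (0 : ℤ)], ![(0 : ℤ), (0 : ℤ), (-1 : ℤ), (0 : ℤ), (0 : ℤ), (0 : ℤ)], ![(1 : ℤ), (0 : ℤ), (0 : ℤ), (0 : ℤ), (0 : ℤ), (1 : ℤ)], ![(0 : ℤ), (0 : ℤ), (0 : ℤ), (0 : ℤ), (0 : ℤ), (0 : ℤ)], ![(1 : ℤ), (0 : ℤ), (0 : ℤ), (0 : ℤ), (0 : ℤ), (0 : ℤ)], ![(0 : ℤ), (0 : ℤ), (-1 : ℤ), (0 : ℤ), (0 : ℤ), (0 : ℤ)], ![(1 : ℤ), (0 : ℤ), (0 : ℤ), (0 : ℤ), (0 : ℤ), (1 : ℤ)]],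
  ![![(0 : ℤ), (0 : ℤ), (0 : ℤ), (0 : ℤ), (0 : ℤ), (0 : ℤ)], ![(1 : ℤ), (1 : ℤ), (2 : ℤ), (-1 : ℤ), (0 : ℤ), (1 : ℤ)], ![(1 : ℤ), (1 : ℤ), (2 : ℤ), (-1 : ℤ), (-1 : ℤ), (1 : ℤ)], ![(0 : ℤ), (2 : ℤ), (3 : ℤ), (-1 : ℤ), (-2 : ℤ), (1 : ℤ)], ![(0 : ℤ), (0 : ℤ), (0 : ℤ), (0 : ℤ), (0 : ℤ), (0 : ℤ)], ![(1 : ℤ), (1 : ℤ), (2 : ℤ), (-1 : ℤ), (0 : ℤ), (1 : ℤ)], ![(1 : ℤ), (1 : ℤ), (2 : ℤ), (-1 : ℤ), (-1 : ℤ), (1 : ℤ)], ![(0 : ℤ), (2 : ℤ), (3 : ℤ), (-1 : ℤ), (-2 : ℤ), (1 : ℤ)]],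
  ![![(0 : ℤ), (0 : ℤ), (0 : ℤ), (0 : ℤ), (0 : ℤ), (0 : ℤ)], ![(1 : ℤ), (0 : ℤ), (1 : ℤ), (0 : ℤ), (0 : ℤ), (0 : ℤ)], ![(1 : ℤ), (0 : ℤ), (0 : ℤ), (0 : ℤ), (0 : ℤ), (0 : ℤ)], ![(0 : ℤ), (0 : ℤ), (0 : ℤ), (0 : ℤ), (0 : ℤ), (0 : ℤ)], ![(0 : ℤ), (0 : ℤ), (0 : ℤ), (0 : ℤ), (0 : ℤ), (0 : ℤ)], ![(1 : ℤ), (0 : ℤ), (1 : ℤ), (0 : ℤ), (0 : ℤ), (0 : ℤ)], ![(1 : ℤ), (0 : ℤ), (0 : ℤ), (0 : ℤ), (0 : ℤ), (0 : ℤ)], ![(0 : ℤ), (0 : ℤ), (0 : ℤ), (0 : ℤ), (0 : ℤ), (0 : ℤ)]],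
  ![![(0 : ℤ), (0 : ℤ), (0 : ℤ), (0 : ℤ), (0 : ℤ), (0 : ℤ)], ![(0 : ℤ), (0 : ℤ), (0 : ℤ), (0 : ℤ), (0 : ℤ), (0 : ℤ)], ![(0 : ℤ), (1 : ℤ), (1 : ℤ), (-1 : ℤ), (0 : ℤ), (1 : ℤ)], ![(0 : ℤ), (1 : ℤ), (2 : ℤ), (-1 : ℤ), (-1 : ℤ), (1 : ℤ)], ![(0 : ℤ), (0 : ℤ), (0 : ℤ), (0 : ℤ), (0 : ℤ), (0 : ℤ)], ![(0 : ℤ), (0 : ℤ), (0 : ℤ), (0 : ℤ), (0 : ℤ), (0 : ℤ)], ![(0 : ℤ), (1 : ℤ), (1 : ℤ), (-1 : ℤ), (0 : ℤ), (1 : ℤ)], ![(0 : ℤ), (1 : ℤ), (2 : ℤ), (-1 : ℤ), (-1 : ℤ), (1 : ℤ)]]]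
def At : Fin 8 → Fin 8 → ℤ := ![
  ![(0 : ℤ), (0 : ℤ), (0 : ℤ), (0 : ℤ), (0 : ℤ), (0 : ℤ), (0 : ℤ), (0 : ℤ)],
  ![(0 : ℤ), (1 : ℤ), (2 : ℤ), (3 : ℤ), (0 : ℤ), (1 : ℤ), (2 : ℤ), (3 : ℤ)],
  ![(0 : ℤ), (0 : ℤ), (0 : ℤ), (0 : ℤ), (0 : ℤ), (0 : ℤ), (0 : ℤ), (0 : ℤ)],
  ![(0 : ℤ), (1 : ℤ), (2 : ℤ), (3 : ℤ), (0 : ℤ), (1 : ℤ), (2 : ℤ), (3 : ℤ)],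
  ![(0 : ℤ), (0 : ℤ), (0 : ℤ), (0 : ℤ), (0 : ℤ), (0 : ℤ), (0 : ℤ), (0 : ℤ)],
  ![(0 : ℤ), (1 : ℤ), (2 : ℤ), (3 : ℤ), (0 : ℤ), (1 : ℤ), (2 : ℤ), (3 : ℤ)],
  ![(0 : ℤ), (0 : ℤ), (0 : ℤ), (0 : ℤ), (0 : ℤ), (0 : ℤ), (0 : ℤ), (0 : ℤ)],
  ![(0 : ℤ), (1 : ℤ), (2 : ℤ), (3 : ℤ), (0 : ℤ), (1 : ℤ), (2 : ℤ), (3 : ℤ)]]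
def Bt : Fin 8 → Fin 8 → ℤ := ![
  ![(0 : ℤ), (0 : ℤ), (0 : ℤ), (0 : ℤ), (0 : ℤ), (0 : ℤ), (0 : ℤ), (0 : ℤ)],
  ![(0 : ℤ), (1 : ℤ), (2 : ℤ), (3 : ℤ), (0 : ℤ), (1 : ℤ), (2 : ℤ), (3 : ℤ)],
  ![(0 : ℤ), (1 : ℤ), (2 : ℤ), (3 : ℤ), (0 : ℤ), (1 : ℤ), (2 : ℤ), (3 : ℤ)],
  ![(0 : ℤ), (2 : ℤ), (0 : ℤ), (2 : ℤ), (0 : ℤ), (2 : ℤ), (0 : ℤ), (2 : ℤ)],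
  ![(0 : ℤ), (2 : ℤ), (0 : ℤ), (2 : ℤ), (0 : ℤ), (2 : ℤ), (0 : ℤ), (2 : ℤ)],
  ![(0 : ℤ), (3 : ℤ), (2 : ℤ), (1 : ℤ), (0 : ℤ), (3 : ℤ), (2 : ℤ), (1 : ℤ)],
  ![(0 : ℤ), (3 : ℤ), (2 : ℤ), (1 : ℤ), (0 : ℤ), (3 : ℤ), (2 : ℤ), (1 : ℤ)],
  ![(0 : ℤ), (0 : ℤ), (0 : ℤ), (0 : ℤ), (0 : ℤ), (0 : ℤ), (0 : ℤ), (0 : ℤ)]]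
def CC : ZMod 8 → ZMod 8 → Fin 6 → ℤ := Ct
def AA : ZMod 8 → ZMod 8 → ℤ := At
def BB : ZMod 8 → ZMod 8 → ℤ := Bt

lemma certAll : ∀ i j x : ZMod 8, pef i j x =
    CC i j 0 * qef 6 7 3 x + CC i j 1 * qef 1 1 3 x + CC i j 2 * qef 4 3 3 x
    + CC i j 3 * qef 3 2 2 x + CC i j 4 * qef 3 5 2 x + CC i j 5 * qef 2 2 1 x
    + AA i j * pef 7 1 x + BB i j * pef 2 1 x := by decide

lemma pe_mem_N (i j : ZMod 8) : pe i j ∈ NN :=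
  cert_mem i j (CC i j) (AA i j) (BB i j) (certAll i j)

lemma fourU1 : (4:ℤ) • u1 ∈ Δ3 8 :=
  cert_memD3 7 1 4 ![(0 : ℤ), (-2 : ℤ), (-3 : ℤ), (1 : ℤ), (2 : ℤ), (-1 : ℤ)] (by decide)

lemma fourU2 : (4:ℤ) • u2 ∈ Δ3 8 :=
  cert_memD3 2 1 4 ![(-2 : ℤ), (0 : ℤ), (-1 : ℤ), (0 : ℤ), (0 : ℤ), (-1 : ℤ)] (by decide)

lemma d3_le_ker : Δ3 8 ≤ LinearMap.ker phi := by
  rw [d3_eq, Submodule.span_le]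
  rintro z ⟨⟨i, j, k⟩, rfl⟩
  exact LinearMap.mem_ker.mpr (phi_qe_zero i j k)

lemma d2_le_N : Δ2 8 ≤ NN := by
  rw [d2_eq, Submodule.span_le]
  rintro z ⟨⟨i, j⟩, rfl⟩
  exact pe_mem_N i j

lemma ker_sub : ∀ x ∈ Δ2 8, phi x = 0 → x ∈ Δ3 8 := by
  intro x hx h0
  obtain ⟨y, hy, z, hz, rfl⟩ := Submodule.mem_sup.mp (d2_le_N hx)
  obtain ⟨a, b, rfl⟩ := Submodule.mem_span_pair.mp hz
  have hφy : phi y = 0 := d3_le_ker hy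
  rw [map_add, hφy, zero_add, map_add, map_smul, map_smul, phi_u1, phi_u2] at h0
  have h1 : (8:ℤ) ∣ 2 * a := by
    have hfst := congrArg Prod.fst h0
    simp only [Prod.fst_add, Prod.smul_fst, smul_zero, add_zero, Prod.fst_zero] at hfst
    have hc : ((2*a : ℤ) : ZMod 8) = 0 := by
      push_cast
      rw [mul_comm]
      rwa [zsmul_eq_mul] at hfst
    exact_mod_cast (ZMod.intCast_zmod_eq_zero_iff_dvd (2*a) 8).mp hc
  have h2 : (8:ℤ) ∣ 2 * b := by
    have hsnd := congrArg Prod.snd h0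
    simp only [Prod.snd_add, Prod.smul_snd, smul_zero, zero_add, Prod.snd_zero] at hsnd
    have hc : ((2*b : ℤ) : ZMod 8) = 0 := by
      push_cast
      rw [mul_comm]
      rwa [zsmul_eq_mul] at hsnd
    exact_mod_cast (ZMod.intCast_zmod_eq_zero_iff_dvd (2*b) 8).mp hc
  obtain ⟨a', ha⟩ : ∃ a', a = 4 * a' := ⟨a / 4, by omega⟩
  obtain ⟨b', hb⟩ : ∃ b', b = 4 * b' := ⟨b / 4, by omega⟩
  refine add_mem hy (add_mem ?_ ?_)
  · rw [ha, mul_comm, ← smul_smul]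
    exact Submodule.smul_mem _ _ fourU1
  · rw [hb, mul_comm, ← smul_smul]
    exact Submodule.smul_mem _ _ fourU2

noncomputable def phiR : (Δ2 8) →ₗ[ℤ] ZMod 8 × ZMod 8 := phi.comp (Δ2 8).subtype

lemma ker_phiR : LinearMap.ker phiR = (Δ3 8).comap (Δ2 8).subtype := by
  ext x
  simp only [LinearMap.mem_ker, phiR, LinearMap.comp_apply, Submodule.subtype_apply,
    Submodule.mem_comap]
  constructor
  · exact fun h => ker_sub x.1 x.2 h
  · exact fun h => LinearMap.mem_ker.mp (d3_le_ker h)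

lemma u1_memD2 : u1 ∈ Δ2 8 := pe_memD2 7 1
lemma u2_memD2 : u2 ∈ Δ2 8 := pe_memD2 2 1

lemma range_phiR : LinearMap.range phiR = LinearMap.range Hl := by
  apply le_antisymm
  · rintro _ ⟨⟨x, hx⟩, rfl⟩
    have hle : Δ2 8 ≤ Submodule.comap phi (LinearMap.range Hl) := by
      rw [d2_eq, Submodule.span_le]
      rintro z ⟨⟨i, j⟩, rfl⟩
      exact phi_pe_mem_rangeH i j
    exact hle hx
  · rintro _ ⟨v, rfl⟩
    refine ⟨(v.1.val : ℕ) • (⟨u1, u1_memD2⟩ : Δ2 8) + (v.2.val : ℕ) • ⟨u2, u2_memD2⟩, ?_⟩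
    have : phiR ((v.1.val : ℕ) • (⟨u1, u1_memD2⟩ : Δ2 8) + (v.2.val : ℕ) • ⟨u2, u2_memD2⟩)
        = (v.1.val : ℕ) • phi u1 + (v.2.val : ℕ) • phi u2 := by
      simp [phiR, map_add, map_nsmul]
    rw [this, phi_u1, phi_u2]
    show _ = (gH v.1, gH v.2)
    have hg : ∀ w : ZMod 4, gH w = ((2 * w.val : ℕ) : ZMod 8) := fun _ => rfl
    rw [hg, hg]
    ext <;> simp [Prod.smul_fst, Prod.smul_snd] <;> simp [Nat.cast_mul, mul_comm]

noncomputable def finalEquiv :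
    ((Δ2 8) ⧸ (Δ3 8).comap (Δ2 8).subtype) ≃ₗ[ℤ] (ZMod 4 × ZMod 4) :=
  ((Submodule.quotEquivOfEq _ _ ker_phiR.symm).trans
    phiR.quotKerEquivRange).trans
    ((LinearEquiv.ofEq _ _ range_phiR).trans (LinearEquiv.ofInjective Hl Hl_inj).symm)
/-- `Δ²(R_8)/Δ³(R_8) ≅ ℤ/4 ⊕ ℤ/4`; in particular its order is 16, not 8. -/
theorem stmt_14 :
    Nonempty (((Δ2 8) ⧸ (Δ3 8).comap (Δ2 8).subtype) ≃ₗ[ℤ] (ZMod 4 × ZMod 4)) ∧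
    Nat.card ((Δ2 8) ⧸ (Δ3 8).comap (Δ2 8).subtype) = 16 ∧
    Nat.card ((Δ2 8) ⧸ (Δ3 8).comap (Δ2 8).subtype) ≠ 8 := by
  refine ⟨⟨finalEquiv⟩, ?_, ?_⟩
  · rw [Nat.card_congr finalEquiv.toEquiv]
    simp [Nat.card_eq_fintype_card]
  · rw [Nat.card_congr finalEquiv.toEquiv]
    simp [Nat.card_eq_fintype_card]
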